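/- Let n ≥ 1, E = ℝⁿ with standard inner product, V = E × E with inner product g((v,w),(u,z)) = ⟨v,u⟩ + ⟨w,z⟩, and for real κ < 1, μ ∈ ℝ, λ := √(1−κ), define φ(v,w) := (−w, v), h(v,w) := (λv, −λw), and the trilinear map R̄ : V×V×V → V by R̄(X,Y)Z = ((1−μ/2)g(Y,Z)+g(hY,Z))X − ((1−μ/2)g(X,Z)+g(hX,Z))Y + (((1−μ/2)/(1−κ))g(hY,Z)+g(Y,Z))hX − (((1−μ/2)/(1−κ))g(hX,Z)+g(X,Z))hY + ((1−μ/2)g(φY,Z)+g(φhY,Z))φX − ((1−μ/2)g(φX,Z)+g(φhX,Z))φY + (((1−μ/2)/(1−κ))g(φhY,Z)+g(φY,Z))φhX − (((1−μ/2)/(1−κ))g(φhX,Z)+g(φX,Z))φhY + (μ−2)g(φX,Y)φZ − 2g(φX,Y)φhZ. Then for all x, y, z ∈ E, writing X = (x,0), Y = (y,0), Z = (z,0), one has R̄(X,Y)Z = (2 − μ + 2λ)·(⟨y,z⟩·(x,0) − ⟨x,z⟩·(y,0)). -/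

import Mathlib

open scoped RealInnerProductSpace

/-- The model vector space `V = ℝⁿ × ℝⁿ` for the tangent space of the base
space of the canonical fibration. -/
abbrev modelV (n : ℕ) := EuclideanSpace ℝ (Fin n) × EuclideanSpace ℝ (Fin n)

/-- The inner product `g((v,w),(u,z)) = ⟨v,u⟩ + ⟨w,z⟩` on `V = ℝⁿ × ℝⁿ`. -/
noncomputable def gV (n : ℕ) (X Y : modelV n) : ℝ :=
  ⟪X.1, Y.1⟫ + ⟪X.2, Y.2⟫

/-- The tensor `φ(v,w) = (−w, v)` on `V = ℝⁿ × ℝⁿ`. -/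
def phiV (n : ℕ) (X : modelV n) : modelV n := (-X.2, X.1)

/-- The tensor `h(v,w) = (λv, −λw)` on `V = ℝⁿ × ℝⁿ`, `λ = √(1−κ)`. -/
noncomputable def hV (n : ℕ) (κ : ℝ) (X : modelV n) : modelV n :=
  (Real.sqrt (1 - κ) • X.1, -(Real.sqrt (1 - κ) • X.2))

/-- The curvature tensor of the canonical connection of the base space of the
canonical fibration of a non-Sasakian contact metric `(κ,μ)`-space, realized
on the model `V = ℝⁿ × ℝⁿ`. -/
noncomputable def Rbar (n : ℕ) (κ μ : ℝ) (X Y Z : modelV n) : modelV n :=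
  ((1 - μ / 2) * gV n Y Z + gV n (hV n κ Y) Z) • X
  - ((1 - μ / 2) * gV n X Z + gV n (hV n κ X) Z) • Y
  + (((1 - μ / 2) / (1 - κ)) * gV n (hV n κ Y) Z + gV n Y Z) • hV n κ X
  - (((1 - μ / 2) / (1 - κ)) * gV n (hV n κ X) Z + gV n X Z) • hV n κ Y
  + ((1 - μ / 2) * gV n (phiV n Y) Z + gV n (phiV n (hV n κ Y)) Z) • phiV n X
  - ((1 - μ / 2) * gV n (phiV n X) Z + gV n (phiV n (hV n κ X)) Z) • phiV n Y
  + (((1 - μ / 2) / (1 - κ)) * gV n (phiV n (hV n κ Y)) Z + gV n (phiV n Y) Z)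
      • phiV n (hV n κ X)
  - (((1 - μ / 2) / (1 - κ)) * gV n (phiV n (hV n κ X)) Z + gV n (phiV n X) Z)
      • phiV n (hV n κ Y)
  + ((μ - 2) * gV n (phiV n X) Y) • phiV n Z
  - (2 * gV n (phiV n X) Y) • phiV n (hV n κ Z)

section PlusEigenspace

variable {n : ℕ}

lemma gV_mk_zero (x y : EuclideanSpace ℝ (Fin n)) : gV n (x, 0) (y, 0) = ⟪x, y⟫ := by
  simp [gV]

lemma hV_mk_zero (κ : ℝ) (x : EuclideanSpace ℝ (Fin n)) :
    hV n κ (x, 0) = Real.sqrt (1 - κ) • ((x, 0) : modelV n) := by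
  simp [hV]

lemma gV_smul_left (c : ℝ) (X Y : modelV n) : gV n (c • X) Y = c * gV n X Y := by
  simp [gV, inner_smul_left, mul_add]

lemma phiV_smul (c : ℝ) (X : modelV n) : phiV n (c • X) = c • phiV n X := by
  simp [phiV]

lemma gV_phiV_mk_zero (x y : EuclideanSpace ℝ (Fin n)) :
    gV n (phiV n (x, 0)) (y, 0) = 0 := by
  simp [gV, phiV]

/-- Since `φ` maps `b₊` to `b₋ ⊥ b₊`, every `φ`-term of `R̄` vanishes on `b₊`, and `h = λ` there. -/
lemma Rbar_mk_zero (κ μ : ℝ) (x y z : EuclideanSpace ℝ (Fin n)) :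
    Rbar n κ μ (x, 0) (y, 0) (z, 0) =
      ((1 - μ / 2) + Real.sqrt (1 - κ)
          + ((1 - μ / 2) / (1 - κ) * Real.sqrt (1 - κ) + 1) * Real.sqrt (1 - κ)) •
        (⟪y, z⟫ • ((x, 0) : modelV n) - ⟪x, z⟫ • ((y, 0) : modelV n)) := by
  simp only [Rbar, hV_mk_zero, phiV_smul, gV_smul_left, gV_mk_zero, gV_phiV_mk_zero,
    mul_zero, add_zero, zero_smul, sub_zero]
  module

end PlusEigenspace

lemma plus_eigenspace_curvature_eq {κ : ℝ} (hκ : κ < 1) (μ : ℝ) :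
    (1 - μ / 2) + Real.sqrt (1 - κ)
        + ((1 - μ / 2) / (1 - κ) * Real.sqrt (1 - κ) + 1) * Real.sqrt (1 - κ) =
      2 - μ + 2 * Real.sqrt (1 - κ) := by
  have hpos : 0 < 1 - κ := by linarith
  have hsq : Real.sqrt (1 - κ) * Real.sqrt (1 - κ) = 1 - κ := Real.mul_self_sqrt hpos.le
  calc (1 - μ / 2) + Real.sqrt (1 - κ)
        + ((1 - μ / 2) / (1 - κ) * Real.sqrt (1 - κ) + 1) * Real.sqrt (1 - κ)
      = (1 - μ / 2) + (1 - μ / 2) / (1 - κ) * (Real.sqrt (1 - κ) * Real.sqrt (1 - κ))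
          + 2 * Real.sqrt (1 - κ) := by ring
    _ = 2 - μ + 2 * Real.sqrt (1 - κ) := by
        rw [hsq, div_mul_cancel₀ _ hpos.ne']
        ring

theorem Rbar_restricted_to_plus_eigenspace_general (n : ℕ) (κ μ : ℝ)
    (hκ : κ < 1) :
    ∀ x y z : EuclideanSpace ℝ (Fin n),
      Rbar n κ μ (x, 0) (y, 0) (z, 0) =
        (2 - μ + 2 * Real.sqrt (1 - κ)) •
          (⟪y, z⟫ • ((x, 0) : modelV n) - ⟪x, z⟫ • ((y, 0) : modelV n)) := by
  intro x y z
  rw [Rbar_mk_zero, plus_eigenspace_curvature_eq hκ]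

/-- The restriction of `R̄` to the `+λ` eigenspace `b₊ = E × {0}` has constant
curvature `2 − μ + 2λ`. -/
theorem Rbar_restricted_to_plus_eigenspace (n : ℕ) (hn : 1 ≤ n) (κ μ : ℝ)
    (hκ : κ < 1) :
    ∀ x y z : EuclideanSpace ℝ (Fin n),
      Rbar n κ μ (x, 0) (y, 0) (z, 0) =
        (2 - μ + 2 * Real.sqrt (1 - κ)) •
          (⟪y, z⟫ • ((x, 0) : modelV n) - ⟪x, z⟫ • ((y, 0) : modelV n)) :=
  Rbar_restricted_to_plus_eigenspace_general n κ μ hκ
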